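/- (First Deformation Lemma) Let S be an asymptotically compact semiflow on a complete metric space X, 𝒜 an attractor with attraction basin Ω, ℳ = {M₁, …, M_l} a Morse decomposition of 𝒜, and V a strict Morse–Lyapunov function of ℳ on Ω with generalized critical values c_k = V(M_k). Let −∞ < a < b < +∞. If V has no generalized critical values in [a,b], then the level set V_a = {x ∈ Ω : V(x) ≤ a} is a strong deformation retract of V_b = {x ∈ Ω : V(x) ≤ b}. -/

import Mathlib

open Metric Set Filter Topology Bornology

/-- A semiflow on a metric space `X`: a map `S : [0,∞) × X → X`, continuous on
`[0,∞) × X`, with `S 0 x = x` and `S (t+s) x = S t (S s x)` for `t, s ≥ 0`. -/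
structure Semiflow (X : Type*) [MetricSpace X] where
  toFun : ℝ → X → X
  continuousOn : ContinuousOn (fun p : ℝ × X => toFun p.1 p.2) (Set.Ici (0:ℝ) ×ˢ Set.univ)
  map_zero : ∀ x, toFun 0 x = x
  map_add : ∀ (t s : ℝ), 0 ≤ t → 0 ≤ s → ∀ x, toFun (t + s) x = toFun t (toFun s x)

namespace Semiflow

variable {X : Type*} [MetricSpace X] (φ : Semiflow X)

/-- Asymptotic compactness: every bounded sequence `x n`, with times `t n → ∞`,
such that `S (t n) (x n)` is bounded, has a convergent subsequence of images. -/
def AsympCompact : Prop :=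
  ∀ (x : ℕ → X) (t : ℕ → ℝ), (∀ n, 0 ≤ t n) →
    IsBounded (Set.range x) → Tendsto t atTop atTop →
    IsBounded (Set.range fun n => φ.toFun (t n) (x n)) →
    ∃ (y : X) (k : ℕ → ℕ), StrictMono k ∧
      Tendsto (fun n => φ.toFun (t (k n)) (x (k n))) atTop (𝓝 y)

/-- `M` attracts `B`: for every `ε > 0` there is `T > 0` with
`S t B ⊆ B(M,ε)` for all `t > T`. -/
def Attracts (M B : Set X) : Prop :=
  ∀ ε > (0:ℝ), ∃ T > (0:ℝ), ∀ t > T, ∀ x ∈ B, infDist (φ.toFun t x) M < ε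

/-- `M` is invariant: `S t M = M` for all `t ≥ 0`. -/
def Invariant (M : Set X) : Prop :=
  ∀ t ≥ (0:ℝ), φ.toFun t '' M = M

/-- An attractor: a compact invariant set attracting a neighborhood of itself. -/
def IsAttractor (A : Set X) : Prop :=
  IsCompact A ∧ φ.Invariant A ∧ ∃ U : Set X, A ⊆ interior U ∧ φ.Attracts A U

/-- The attraction basin of `A`: points whose orbits converge to `A`. -/
def basin (A : Set X) : Set X :=
  {x | Tendsto (fun t : ℝ => infDist (φ.toFun t x) A) atTop (𝓝 0)}

/-- The ω-limit set of a set `A`. -/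
def omegaLimit (A : Set X) : Set X :=
  {y | ∃ (x : ℕ → X) (t : ℕ → ℝ), (∀ n, x n ∈ A) ∧ (∀ n, 0 ≤ t n) ∧
    Tendsto t atTop atTop ∧ Tendsto (fun n => φ.toFun (t n) (x n)) atTop (𝓝 y)}

/-- A complete trajectory of the semiflow. -/
def IsCompleteTraj (γ : ℝ → X) : Prop :=
  ∀ s t : ℝ, s ≤ t → γ t = φ.toFun (t - s) (γ s)

/-- ω-limit set of a complete trajectory. -/
def trajOmega (γ : ℝ → X) : Set X :=
  {y | ∃ t : ℕ → ℝ, Tendsto t atTop atTop ∧ Tendsto (fun n => γ (t n)) atTop (𝓝 y)}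

/-- α-limit set of a complete trajectory. -/
def trajAlpha (γ : ℝ → X) : Set X :=
  {y | ∃ t : ℕ → ℝ, Tendsto t atTop atBot ∧ Tendsto (fun n => γ (t n)) atTop (𝓝 y)}

/-- The dual repeller of `A` inside `𝒜`. -/
def dualRepeller (𝒜 A : Set X) : Set X :=
  {x ∈ 𝒜 | φ.omegaLimit {x} ∩ A = ∅}

/-- `A` is an attractor of the restricted semiflow on the invariant set `𝒜`:
`A ⊆ 𝒜` is compact, invariant, and attracts a relative neighborhood of itself in `𝒜`. -/
def IsAttractorIn (𝒜 A : Set X) : Prop :=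
  A ⊆ 𝒜 ∧ IsCompact A ∧ φ.Invariant A ∧
    ∃ V : Set X, IsOpen V ∧ A ⊆ V ∧ φ.Attracts A (𝒜 ∩ V)

/-- `M 1, …, M l` is a Morse decomposition of `𝒜` with Morse filtration
`∅ = A 0 ⊊ A 1 ⊊ ⋯ ⊊ A l = 𝒜`. -/
def IsMorseDecompositionWithFiltration (𝒜 : Set X) (l : ℕ) (M A : ℕ → Set X) : Prop :=
  A 0 = (∅ : Set X) ∧ A l = 𝒜 ∧
  (∀ k, 1 ≤ k → k ≤ l → φ.IsAttractorIn 𝒜 (A k)) ∧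
  (∀ k, 1 ≤ k → k ≤ l → A (k - 1) ⊂ A k) ∧
  (∀ k, 1 ≤ k → k ≤ l → M k = A k ∩ φ.dualRepeller 𝒜 (A (k - 1)))

/-- `M 1, …, M l` is a Morse decomposition of `𝒜`. -/
def IsMorseDecomposition (𝒜 : Set X) (l : ℕ) (M : ℕ → Set X) : Prop :=
  ∃ A : ℕ → Set X, φ.IsMorseDecompositionWithFiltration 𝒜 l M A

/-- The Dini derivative of `V` along the semiflow. -/
noncomputable def dini (V : X → ℝ) (x : X) : ℝ :=
  Filter.limsup (fun t : ℝ => (V (φ.toFun t x) - V x) / t) (𝓝[>] (0:ℝ))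

end Semiflow

/-- `A ⊂⊂ B`: the closure of `A` is contained in the interior of `B` and
`dist (A, ∂B) > 0`. -/
def WayInside {X : Type*} [MetricSpace X] (A B : Set X) : Prop :=
  closure A ⊆ interior B ∧ ∃ δ > (0:ℝ), ∀ x ∈ A, ∀ y ∈ frontier B, δ ≤ dist x y

/-- `V` is radially unbounded on the open set `Ω`. -/
def RadiallyUnbounded {X : Type*} [MetricSpace X] (V : X → ℝ) (Ω : Set X) : Prop :=
  ∀ R > (0:ℝ), ∃ B : Set X, IsBounded B ∧ IsClosed B ∧ B ⊆ Ω ∧ WayInside B Ω ∧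
    ∀ x ∈ Ω \ B, R < V x

/-- `F` is a strong deformation retract of `E`. -/
def IsStrongDeformationRetract {X : Type*} [MetricSpace X] (F E : Set X) : Prop :=
  F ⊆ E ∧ ∃ H : ℝ × X → X, ContinuousOn H (Set.Icc (0:ℝ) 1 ×ˢ E) ∧
    (∀ x ∈ E, H (0, x) = x) ∧ (∀ x ∈ E, H (1, x) ∈ F) ∧
    (∀ σ ∈ Set.Icc (0:ℝ) 1, ∀ x ∈ F, H (σ, x) = x) ∧
    (∀ σ ∈ Set.Icc (0:ℝ) 1, ∀ x ∈ E, H (σ, x) ∈ E)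

namespace Semiflow

variable {X : Type*} [MetricSpace X] (φ : Semiflow X)

/-- A Morse–Lyapunov function of the Morse decomposition `M` on `Ω`. -/
def IsMorseLyapunov (Ω : Set X) (l : ℕ) (M : ℕ → Set X) (V : X → ℝ) : Prop :=
  ContinuousOn V Ω ∧
  (∀ k, 1 ≤ k → k ≤ l → ∃ c : ℝ, ∀ x ∈ M k, V x = c) ∧
  (∀ x ∈ Ω \ ⋃ k ∈ Set.Icc 1 l, M k,
    StrictAntiOn (fun t : ℝ => V (φ.toFun t x)) (Set.Ici (0:ℝ)))

/-- A strict Morse–Lyapunov function: the values on the Morse sets are increasing. -/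
def IsStrictMorseLyapunov (Ω : Set X) (l : ℕ) (M : ℕ → Set X) (V : X → ℝ) : Prop :=
  φ.IsMorseLyapunov Ω l M V ∧ ∃ c : ℕ → ℝ,
    (∀ k, 1 ≤ k → k ≤ l → ∀ x ∈ M k, V x = c k) ∧
    (∀ j k, 1 ≤ j → j < k → k ≤ l → c j < c k)

end Semiflow

/-!
Along every orbit in the basin `V` is nonincreasing, and it cannot stay above `a` forever:
such an orbit accumulates at a point `y` of the compact attractor with `V (S 1 y) = V y`, so `y`
lies in a Morse set while `V y ∈ [a, b]`. Hence every point `x` of `V_b` reaches `V_a` at a first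
time `τ x`. As `a` is not a critical value, orbits cross the level `a` strictly, which makes `τ`
continuous, and `H (σ, x) = S (σ τ x) x` is the deformation.
-/

open Metric Set Filter Topology

/-- When `g` never drops to `a` this is the junk value `sInf ∅ = 0`. -/
noncomputable def hittingTime (g : ℝ → ℝ) (a : ℝ) : ℝ :=
  sInf {t | 0 ≤ t ∧ g t ≤ a}

section HittingTime

variable {g : ℝ → ℝ} {a t : ℝ}

lemma bddBelow_hittingSet : BddBelow {t | 0 ≤ t ∧ g t ≤ a} :=
  ⟨0, fun _ ht => ht.1⟩

lemma hittingTime_nonneg : 0 ≤ hittingTime g a :=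
  Real.sInf_nonneg fun _ ht => ht.1

lemma hittingTime_le (ht : 0 ≤ t) (hgt : g t ≤ a) : hittingTime g a ≤ t :=
  csInf_le bddBelow_hittingSet ⟨ht, hgt⟩

lemma hittingTime_eq_zero (hg : g 0 ≤ a) : hittingTime g a = 0 :=
  (hittingTime_le le_rfl hg).antisymm hittingTime_nonneg

lemma lt_of_lt_hittingTime (ht : 0 ≤ t) (hlt : t < hittingTime g a) : a < g t := by
  by_contra! hgt
  exact (hittingTime_le ht hgt).not_gt hlt

lemma le_hittingTime (hhit : ∃ s ≥ 0, g s ≤ a) (hg : AntitoneOn g (Ici 0)) (ht : 0 ≤ t)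
    (hgt : a < g t) : t ≤ hittingTime g a := by
  obtain ⟨s, hs, hgs⟩ := hhit
  refine le_csInf ⟨s, hs, hgs⟩ fun u ⟨hu, hgu⟩ => ?_
  by_contra! hut
  exact (hgt.trans_le (hg hu ht hut.le)).not_ge hgu

lemma apply_hittingTime_le (hg : ContinuousOn g (Ici 0)) (hhit : ∃ s ≥ 0, g s ≤ a) :
    g (hittingTime g a) ≤ a := by
  obtain ⟨s, hs, hgs⟩ := hhit
  have hclosed : IsClosed {t | 0 ≤ t ∧ g t ≤ a} :=
    hg.preimage_isClosed_of_isClosed isClosed_Ici isClosed_Iic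
  exact (hclosed.csInf_mem ⟨s, hs, hgs⟩ bddBelow_hittingSet).2

end HittingTime

section HittingTimeContinuity

variable {α : Type*} [TopologicalSpace α] {f : α → ℝ → ℝ} {E : Set α} {x : α} {a c : ℝ}

lemma eventually_lt_hittingTime (hf : ∀ t ≥ 0, ContinuousWithinAt (f · t) E x)
    (hanti : ∀ y ∈ E, AntitoneOn (f y) (Ici 0)) (hhit : ∀ y ∈ E, ∃ t ≥ 0, f y t ≤ a)
    (hc : c < hittingTime (f x) a) : ∀ᶠ y in 𝓝[E] x, c < hittingTime (f y) a := by
  obtain ⟨t, hct, htT⟩ := exists_between hc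
  rcases lt_or_ge t 0 with ht | ht
  · exact Eventually.of_forall fun _ => (hct.trans ht).trans_le hittingTime_nonneg
  have hat : ∀ᶠ y in 𝓝[E] x, a < f y t :=
    (hf t ht).eventually (eventually_gt_nhds (lt_of_lt_hittingTime ht htT))
  filter_upwards [hat, self_mem_nhdsWithin] with y hyt hy
  exact hct.trans_le (le_hittingTime (hhit y hy) (hanti y hy) ht hyt)

lemma eventually_hittingTime_lt (hf : ∀ t ≥ 0, ContinuousWithinAt (f · t) E x)
    (hcross : ∀ s > hittingTime (f x) a, f x s < a) (hc : hittingTime (f x) a < c) :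
    ∀ᶠ y in 𝓝[E] x, hittingTime (f y) a < c := by
  obtain ⟨t, hTt, htc⟩ := exists_between hc
  have ht : 0 ≤ t := hittingTime_nonneg.trans hTt.le
  filter_upwards [(hf t ht).eventually (eventually_lt_nhds (hcross t hTt))] with y hyt
  exact (hittingTime_le ht hyt.le).trans_lt htc

lemma continuousWithinAt_hittingTime (hf : ∀ t ≥ 0, ContinuousWithinAt (f · t) E x)
    (hanti : ∀ y ∈ E, AntitoneOn (f y) (Ici 0)) (hhit : ∀ y ∈ E, ∃ t ≥ 0, f y t ≤ a)
    (hcross : ∀ s > hittingTime (f x) a, f x s < a) :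
    ContinuousWithinAt (fun y => hittingTime (f y) a) E x :=
  tendsto_order.2 ⟨fun _ hc => eventually_lt_hittingTime hf hanti hhit hc,
    fun _ hc => eventually_hittingTime_lt hf hcross hc⟩

end HittingTimeContinuity

lemma IsCompact.exists_subseq_tendsto_of_infDist {X : Type*} [MetricSpace X] {K : Set X}
    (hK : IsCompact K) (hne : K.Nonempty) {u : ℕ → X}
    (hu : Tendsto (fun n => infDist (u n) K) atTop (𝓝 0)) :
    ∃ y ∈ K, ∃ k : ℕ → ℕ, StrictMono k ∧ Tendsto (u ∘ k) atTop (𝓝 y) := by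
  choose v hvK hv using fun n => hK.exists_infDist_eq_dist hne (u n)
  obtain ⟨y, hy, k, hk, hvk⟩ := hK.tendsto_subseq hvK
  refine ⟨y, hy, k, hk, hvk.congr_dist ?_⟩
  exact (hu.comp hk.tendsto_atTop).congr fun n => by simp only [Function.comp_apply, hv, dist_comm]

namespace Semiflow

variable {X : Type*} [MetricSpace X] (φ : Semiflow X)

lemma continuous_toFun {t : ℝ} (ht : 0 ≤ t) : Continuous (φ.toFun t) :=
  continuousOn_univ.1 <| φ.continuousOn.comp (Continuous.prodMk_right t).continuousOn
    fun _ _ => ⟨ht, trivial⟩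

variable {φ}

lemma Invariant.toFun_mem {A : Set X} (hA : φ.Invariant A) {x : X} (hx : x ∈ A) {t : ℝ}
    (ht : 0 ≤ t) : φ.toFun t x ∈ A :=
  hA t ht ▸ mem_image_of_mem _ hx

lemma toFun_mem_basin {K : Set X} {x : X} (hx : x ∈ φ.basin K) {s : ℝ} (hs : 0 ≤ s) :
    φ.toFun s x ∈ φ.basin K := by
  refine (hx.comp (tendsto_atTop_add_const_right atTop s tendsto_id)).congr' ?_
  filter_upwards [eventually_ge_atTop 0] with t ht
  simp only [Function.comp_apply, id, φ.map_add t s ht hs]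

lemma Invariant.subset_basin {K : Set X} (hK : φ.Invariant K) : K ⊆ φ.basin K := fun _ hx =>
  tendsto_const_nhds.congr' <| (eventually_ge_atTop 0).mono fun _ ht =>
    (infDist_zero_of_mem (hK.toFun_mem hx ht)).symm

lemma omegaLimit_toFun_subset {x : X} {t : ℝ} (ht : 0 ≤ t) :
    φ.omegaLimit {φ.toFun t x} ⊆ φ.omegaLimit {x} := by
  rintro y ⟨xs, ts, hxs, hts, htop, hconv⟩
  refine ⟨fun _ => x, fun n => ts n + t, fun _ => rfl, fun n => add_nonneg (hts n) ht,
    tendsto_atTop_add_const_right atTop t htop, hconv.congr fun n => ?_⟩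
  rw [φ.map_add (ts n) t (hts n) ht, ← mem_singleton_iff.1 (hxs n)]

lemma toFun_mem_dualRepeller {𝒜 A : Set X} {x : X} (hx : x ∈ φ.dualRepeller 𝒜 A) {t : ℝ}
    (ht : 0 ≤ t) (h𝒜 : φ.toFun t x ∈ 𝒜) : φ.toFun t x ∈ φ.dualRepeller 𝒜 A :=
  ⟨h𝒜, subset_empty_iff.1 <| hx.2 ▸ inter_subset_inter_left A (omegaLimit_toFun_subset ht)⟩

section Morse

variable {𝒜 : Set X} {l : ℕ} {M : ℕ → Set X}

lemma IsMorseDecomposition.nonempty (hMD : φ.IsMorseDecomposition 𝒜 l M) (hl : 1 ≤ l) :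
    𝒜.Nonempty := by
  obtain ⟨A, hA0, -, hattr, hssub, -⟩ := hMD
  have h := hssub 1 le_rfl hl
  rw [Nat.sub_self, hA0, empty_ssubset] at h
  exact h.mono (hattr 1 le_rfl hl).1

lemma IsMorseDecomposition.toFun_mem (hMD : φ.IsMorseDecomposition 𝒜 l M) {k : ℕ} (hk : 1 ≤ k)
    (hkl : k ≤ l) {x : X} (hx : x ∈ M k) {t : ℝ} (ht : 0 ≤ t) : φ.toFun t x ∈ M k := by
  obtain ⟨A, -, -, hattr, -, hM⟩ := hMD
  obtain ⟨hA𝒜, -, hAinv, -⟩ := hattr k hk hkl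
  rw [hM k hk hkl] at hx ⊢
  have hxA := hAinv.toFun_mem hx.1 ht
  exact ⟨hxA, toFun_mem_dualRepeller hx.2 ht (hA𝒜 hxA)⟩

variable {Ω : Set X} {V : X → ℝ}

lemma IsMorseLyapunov.antitoneOn (hV : φ.IsMorseLyapunov Ω l M V)
    (hM : ∀ k, 1 ≤ k → k ≤ l → ∀ x ∈ M k, ∀ t ≥ 0, φ.toFun t x ∈ M k) {x : X} (hx : x ∈ Ω) :
    AntitoneOn (fun t => V (φ.toFun t x)) (Ici 0) := by
  by_cases hxM : x ∈ ⋃ k ∈ Icc 1 l, M k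
  · simp only [mem_iUnion, exists_prop] at hxM
    obtain ⟨k, ⟨hk, hkl⟩, hxk⟩ := hxM
    obtain ⟨c, hc⟩ := hV.2.1 k hk hkl
    intro s hs t ht _
    simp only [hc _ (hM k hk hkl x hxk s hs), hc _ (hM k hk hkl x hxk t ht), le_refl]
  · exact (hV.2.2 x ⟨hx, hxM⟩).antitoneOn

lemma IsMorseLyapunov.lt_of_mem_Icc (hV : φ.IsMorseLyapunov Ω l M V) {a b : ℝ}
    (hcrit : ∀ k, 1 ≤ k → k ≤ l → ∀ x ∈ M k, V x ∉ Icc a b) {y : X} (hy : y ∈ Ω)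
    (hyab : V y ∈ Icc a b) {t : ℝ} (ht : 0 < t) : V (φ.toFun t y) < V y := by
  have hyM : y ∉ ⋃ k ∈ Icc 1 l, M k := by
    simp only [mem_iUnion, exists_prop, not_exists, not_and]
    exact fun k hk hyk => hcrit k hk.1 hk.2 y hyk hyab
  simpa only [φ.map_zero] using hV.2.2 y ⟨hy, hyM⟩ self_mem_Ici ht.le ht

end Morse

variable {V : X → ℝ}

lemma exists_toFun_le_of_mem_basin {K : Set X} (hK : IsCompact K) (hne : K.Nonempty)
    (hKinv : φ.Invariant K) (hVc : ContinuousOn V (φ.basin K))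
    (hanti : ∀ x ∈ φ.basin K, AntitoneOn (fun t => V (φ.toFun t x)) (Ici 0)) {a b : ℝ}
    (hstrict : ∀ y ∈ K, V y ∈ Icc a b → V (φ.toFun 1 y) < V y)
    {x : X} (hx : x ∈ φ.basin K) (hxb : V x ≤ b) : ∃ t ≥ 0, V (φ.toFun t x) ≤ a := by
  by_contra! habove
  have hVlim : ∀ {u : ℕ → X} {z : X}, (∀ n, u n ∈ φ.basin K) → z ∈ φ.basin K →
      Tendsto u atTop (𝓝 z) → Tendsto (V ∘ u) atTop (𝓝 (V z)) := fun hu hz huz =>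
    (hVc _ hz).tendsto.comp (tendsto_nhdsWithin_iff.2 ⟨huz, .of_forall hu⟩)
  set g : ℕ → ℝ := fun n => V (φ.toFun n x)
  have hg_anti : Antitone g := fun m n hmn =>
    hanti x hx (mem_Ici.2 m.cast_nonneg) (mem_Ici.2 n.cast_nonneg) (Nat.cast_le.2 hmn)
  have hg_bdd : BddBelow (range g) := ⟨a, forall_mem_range.2 fun n => (habove n n.cast_nonneg).le⟩
  obtain ⟨L, hgL⟩ : ∃ L, Tendsto g atTop (𝓝 L) := ⟨_, tendsto_atTop_ciInf hg_anti hg_bdd⟩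
  obtain ⟨y, hyK, k, hk, hky⟩ := hK.exists_subseq_tendsto_of_infDist hne
    (hx.comp tendsto_natCast_atTop_atTop)
  have hy := hKinv.subset_basin hyK
  have horbit : ∀ n, φ.toFun (k n) x ∈ φ.basin K := fun n => toFun_mem_basin hx (k n).cast_nonneg
  have hVyL : V y = L := tendsto_nhds_unique (hVlim horbit hy hky) (hgL.comp hk.tendsto_atTop)
  have hVSyL : V (φ.toFun 1 y) = L := by
    have hS : Tendsto (fun n => φ.toFun 1 (φ.toFun (k n) x)) atTop (𝓝 (φ.toFun 1 y)) :=
      ((φ.continuous_toFun zero_le_one).tendsto y).comp hky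
    refine tendsto_nhds_unique (hVlim (fun n => toFun_mem_basin (horbit n) zero_le_one)
      (toFun_mem_basin hy zero_le_one) hS) ((hgL.comp (tendsto_add_atTop_nat 1)).comp
        hk.tendsto_atTop |>.congr fun n => ?_)
    simp only [Function.comp_apply, g, Nat.cast_succ, add_comm _ (1 : ℝ),
      φ.map_add 1 _ zero_le_one (Nat.cast_nonneg _)]
  have haL : a ≤ L := ge_of_tendsto' hgL fun n => (habove n n.cast_nonneg).le
  have hLb : L ≤ b := (hg_anti.le_of_tendsto hgL 0).trans (by simpa [g, φ.map_zero] using hxb)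
  exact (hstrict y hyK (hVyL ▸ ⟨haL, hLb⟩)).ne (hVSyL.trans hVyL.symm)

lemma isStrongDeformationRetract_of_stoppingTime {E F : Set X} {T : X → ℝ}
    (hFE : F ⊆ E) (hT : ContinuousOn T E) (hT0 : ∀ x ∈ E, 0 ≤ T x) (hTF : ∀ x ∈ F, T x = 0)
    (hend : ∀ x ∈ E, φ.toFun (T x) x ∈ F) (hE : ∀ x ∈ E, ∀ t ∈ Icc 0 (T x), φ.toFun t x ∈ E) :
    IsStrongDeformationRetract F E := by
  have hσT : ∀ σ ∈ Icc (0 : ℝ) 1, ∀ x ∈ E, σ * T x ∈ Icc 0 (T x) := fun σ hσ x hx =>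
    ⟨mul_nonneg hσ.1 (hT0 x hx), mul_le_of_le_one_left (hT0 x hx) hσ.2⟩
  refine ⟨hFE, fun p => φ.toFun (p.1 * T p.2) p.2, ?_, fun x _ => ?_, fun x hx => ?_,
    fun σ _ x hx => ?_, fun σ hσ x hx => hE x hx _ (hσT σ hσ x hx)⟩
  · refine φ.continuousOn.comp (continuousOn_fst.mul (hT.comp continuousOn_snd fun p hp => hp.2)
      |>.prodMk continuousOn_snd) fun p hp => ⟨(hσT p.1 hp.1 p.2 hp.2).1, trivial⟩
  · simp only [zero_mul, φ.map_zero]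
  · simpa only [one_mul] using hend x hx
  · simp only [hTF x hx, mul_zero, φ.map_zero]

theorem isStrongDeformationRetract_sublevel {Ω : Set X} {a b : ℝ} (hab : a ≤ b)
    (hΩ : ∀ x ∈ Ω, ∀ t ≥ 0, φ.toFun t x ∈ Ω) (hVc : ContinuousOn V Ω)
    (hanti : ∀ x ∈ Ω, AntitoneOn (fun t => V (φ.toFun t x)) (Ici 0))
    (hcross : ∀ z ∈ Ω, V z = a → ∀ s > 0, V (φ.toFun s z) < a)
    (hhit : ∀ x ∈ Ω, V x ≤ b → ∃ t ≥ 0, V (φ.toFun t x) ≤ a) :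
    IsStrongDeformationRetract {x ∈ Ω | V x ≤ a} {x ∈ Ω | V x ≤ b} := by
  set f : X → ℝ → ℝ := fun x t => V (φ.toFun t x)
  have hft : ∀ x ∈ Ω, ContinuousOn (f x) (Ici 0) := fun x hx =>
    hVc.comp (φ.continuousOn.comp (Continuous.prodMk_left x).continuousOn
      fun _ ht => ⟨ht, trivial⟩) fun t ht => hΩ x hx t ht
  have hfx : ∀ t ≥ 0, ContinuousOn (f · t) Ω := fun t ht =>
    hVc.comp (φ.continuous_toFun ht).continuousOn fun x hx => hΩ x hx t ht
  have hend : ∀ x ∈ Ω, V x ≤ b → f x (hittingTime (f x) a) ≤ a := fun x hx hxb =>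
    apply_hittingTime_le (hft x hx) (hhit x hx hxb)
  have hbelow : ∀ z ∈ Ω, V z ≤ a → ∀ s > 0, V (φ.toFun s z) < a := by
    intro z hz hza s hs
    rcases hza.eq_or_lt with h | h
    · exact hcross z hz h s hs
    · exact (hanti z hz self_mem_Ici hs.le hs.le).trans_lt (by simpa only [φ.map_zero] using h)
  refine isStrongDeformationRetract_of_stoppingTime (T := fun x => hittingTime (f x) a)
    (fun x hx => ⟨hx.1, hx.2.trans hab⟩) (fun x hx => ?_) (fun _ _ => hittingTime_nonneg)
    (fun x hx => hittingTime_eq_zero (by simpa [f, φ.map_zero] using hx.2))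
    (fun x hx => ⟨hΩ x hx.1 _ hittingTime_nonneg, hend x hx.1 hx.2⟩)
    (fun x hx t ht => ⟨hΩ x hx.1 t ht.1, ?_⟩)
  · refine continuousWithinAt_hittingTime (fun t ht => (hfx t ht x hx.1).mono fun y hy => hy.1)
      (fun y hy => hanti y hy.1) (fun y hy => hhit y hy.1 hy.2) fun s hs => ?_
    have hT := hittingTime_nonneg (g := f x) (a := a)
    have h := hbelow _ (hΩ x hx.1 _ hT) (hend x hx.1 hx.2) (s - _) (sub_pos.2 hs)
    rwa [← φ.map_add _ _ (sub_nonneg.2 hs.le) hT, sub_add_cancel] at h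
  · calc V (φ.toFun t x) ≤ V (φ.toFun 0 x) := hanti x hx.1 self_mem_Ici ht.1 ht.1
      _ ≤ b := by simpa [φ.map_zero] using hx.2

end Semiflow

theorem stmt18_general {X : Type*} [MetricSpace X] (φ : Semiflow X)
    (𝒜 : Set X) (h𝒜 : φ.IsAttractor 𝒜)
    (l : ℕ) (hl : 1 ≤ l) (M : ℕ → Set X) (hMD : φ.IsMorseDecomposition 𝒜 l M)
    (V : X → ℝ) (hV : φ.IsStrictMorseLyapunov (φ.basin 𝒜) l M V)
    (a b : ℝ) (hab : a < b)
    (hcrit : ∀ k, 1 ≤ k → k ≤ l → ∀ x ∈ M k, V x ∉ Set.Icc a b) :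
    IsStrongDeformationRetract {x ∈ φ.basin 𝒜 | V x ≤ a} {x ∈ φ.basin 𝒜 | V x ≤ b} := by
  obtain ⟨h𝒜c, h𝒜inv, -⟩ := h𝒜
  have hML := hV.1
  have hanti : ∀ x ∈ φ.basin 𝒜, AntitoneOn (fun t => V (φ.toFun t x)) (Set.Ici 0) :=
    fun x hx => hML.antitoneOn (fun k hk hkl y hy t ht => hMD.toFun_mem hk hkl hy ht) hx
  refine Semiflow.isStrongDeformationRetract_sublevel hab.le
    (fun x hx t ht => Semiflow.toFun_mem_basin hx ht) hML.1 hanti ?_ ?_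
  · intro z hz hza s hs
    simpa only [hza] using hML.lt_of_mem_Icc hcrit hz ⟨hza.ge, hza.le.trans hab.le⟩ hs
  · exact fun x hx => Semiflow.exists_toFun_le_of_mem_basin h𝒜c (hMD.nonempty hl) h𝒜inv hML.1
      hanti (fun y hy hyab => hML.lt_of_mem_Icc hcrit (h𝒜inv.subset_basin hy) hyab one_pos) hx

/-- First Deformation Lemma: if a strict Morse–Lyapunov function `V` of a
Morse decomposition has no generalized critical values in `[a,b]`, then the sublevel set
`V_a` is a strong deformation retract of `V_b`. -/
theorem stmt18 {X : Type*} [MetricSpace X] [CompleteSpace X] (φ : Semiflow X)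
    (hac : φ.AsympCompact) (𝒜 : Set X) (h𝒜 : φ.IsAttractor 𝒜)
    (l : ℕ) (hl : 1 ≤ l) (M : ℕ → Set X) (hMD : φ.IsMorseDecomposition 𝒜 l M)
    (V : X → ℝ) (hV : φ.IsStrictMorseLyapunov (φ.basin 𝒜) l M V)
    (a b : ℝ) (hab : a < b)
    (hcrit : ∀ k, 1 ≤ k → k ≤ l → ∀ x ∈ M k, V x ∉ Set.Icc a b) :
    IsStrongDeformationRetract {x ∈ φ.basin 𝒜 | V x ≤ a} {x ∈ φ.basin 𝒜 | V x ≤ b} :=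
  stmt18_general φ 𝒜 h𝒜 l hl M hMD V hV a b hab hcrit
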